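/- Let α ∈ ℝ. As n → ∞, the quantity Δ_n² ∑_{(j,k)} sup_{x ∈ X_{j,k}} ‖x‖^{−α}, where the sum runs over all pairs (j,k) with (2πj/n, 2πk/n) ∈ [−π,π)² \ {0}, is O(n^{α−2}) if α > 2, O(log n) if α = 2, and O(1) if α < 2. -/

import Mathlib

/-!
The cell `X_{j,k}` is the sup-norm ball of radius `π/n` about `(2πj/n, 2πk/n)`, so on it the
Euclidean norm is comparable to `π m/n`, where `m = max(|j|, |k|)` indexes the square shell of
`ℤ²` through `(j, k)`. Hence each supremum is `O((m/n)^{-α})`, whatever the sign of `α`, and since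
the `m`-th shell has `8m` points,
`Δ_n² ∑ sup ≲ n^{-2} ∑_{m=1}^n m (m/n)^{-α} = n^{α-2} ∑_{m=1}^n m^{1-α}`.
The last sum is bounded for `α > 2`, is the harmonic number `H_n ≤ 1 + log n` for `α = 2`, and is
`O(n^{2-α})` for `α < 2`: for `0 < β ≤ 1` Bernoulli's inequality gives
`β m^{β-1} ≤ m^β - (m-1)^β`, which telescopes.
-/

open Real Filter

open scoped Classical

noncomputable section

/-- `Δ_n² ∑_{(j,k)} sup_{x ∈ X_{j,k}} ‖x‖^{−α}`, the sum running over the pairs `(j,k)`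
with `(2πj/n, 2πk/n) ∈ [−π,π)² \ {0}`, where `X_{j,k} = [2πj/n − π/n, 2πj/n + π/n] ×
[2πk/n − π/n, 2πk/n + π/n]`. -/
def radialSum (α : ℝ) (n : ℕ) : ℝ :=
  (2 * π / n) ^ 2 *
    ∑' j : ℤ, ∑' k : ℤ,
      if -π ≤ 2 * π * j / n ∧ 2 * π * j / n < π ∧
          -π ≤ 2 * π * k / n ∧ 2 * π * k / n < π ∧ (j, k) ≠ (0, 0)
      then
        sSup ((fun p : ℝ × ℝ => Real.sqrt (p.1 ^ 2 + p.2 ^ 2) ^ (-α)) ''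
          (Set.Icc (2 * π * j / n - π / n) (2 * π * j / n + π / n) ×ˢ
            Set.Icc (2 * π * k / n - π / n) (2 * π * k / n + π / n)))
      else 0

open Finset Asymptotics

theorem rpow_le_rpow_add_rpow_of_mem_Icc {a b r : ℝ} (ha : 0 < a) (hr : r ∈ Set.Icc a b)
    (s : ℝ) : r ^ s ≤ a ^ s + b ^ s := by
  have hr0 : 0 < r := ha.trans_le hr.1
  rcases le_total 0 s with hs | hs
  · exact (rpow_le_rpow hr0.le hr.2 hs).trans (le_add_of_nonneg_left (rpow_nonneg ha.le s))
  · exact (rpow_le_rpow_of_nonpos ha hr.1 hs).trans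
      (le_add_of_nonneg_right (rpow_nonneg (hr0.le.trans hr.2) s))

theorem Prod.norm_le_sqrt_sq_add_sq (x : ℝ × ℝ) : ‖x‖ ≤ √(x.1 ^ 2 + x.2 ^ 2) := by
  rw [Prod.norm_def, Real.norm_eq_abs, Real.norm_eq_abs, ← sqrt_sq_eq_abs, ← sqrt_sq_eq_abs]
  exact max_le (sqrt_le_sqrt (le_add_of_nonneg_right (sq_nonneg _)))
    (sqrt_le_sqrt (le_add_of_nonneg_left (sq_nonneg _)))

theorem Prod.sqrt_sq_add_sq_le_two_mul_norm (x : ℝ × ℝ) : √(x.1 ^ 2 + x.2 ^ 2) ≤ 2 * ‖x‖ := by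
  have h1 : |x.1| ≤ ‖x‖ := norm_fst_le x
  have h2 : |x.2| ≤ ‖x‖ := norm_snd_le x
  rw [sqrt_le_left (by positivity)]
  nlinarith [sq_abs x.1, sq_abs x.2, abs_nonneg x.1, abs_nonneg x.2]

theorem Finset.sum_Icc_neg_eq_sum_range_sum_box {α M : Type*} [Ring α] [PartialOrder α]
    [IsOrderedRing α] [LocallyFiniteOrder α] [DecidableEq α] [AddCommMonoid M]
    (f : α → M) (n : ℕ) :
    ∑ x ∈ Icc (-n : α) n, f x = ∑ m ∈ range (n + 1), ∑ x ∈ box m, f x := by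
  induction n with
  | zero => simp
  | succ n ih => rw [sum_range_succ, ← ih, ← box_succ_disjUnion, sum_disjUnion, add_comm]

theorem tsum_tsum_eq_sum_product {α β M : Type*} [AddCommMonoid M] [TopologicalSpace M]
    {f : α → β → M} (s : Finset α) (t : Finset β) (hf : ∀ a b, f a b ≠ 0 → a ∈ s ∧ b ∈ t) :
    ∑' a, ∑' b, f a b = ∑ p ∈ s ×ˢ t, f p.1 p.2 := by
  rw [sum_product, tsum_eq_sum (s := s)]
  · refine sum_congr rfl fun a _ => tsum_eq_sum fun b hb => ?_
    exact not_imp_comm.1 (hf a b) fun h => hb h.2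
  · intro a ha
    rw [tsum_eq_sum (s := ∅) fun b _ => not_imp_comm.1 (hf a b) fun h => ha h.1]
    simp

theorem mul_rpow_sub_one_le_rpow_sub_rpow {β x : ℝ} (hβ0 : 0 ≤ β) (hβ1 : β ≤ 1) (hx : 1 ≤ x) :
    β * x ^ (β - 1) ≤ x ^ β - (x - 1) ^ β := by
  have hx0 : 0 < x := by linarith
  have hs : -1 ≤ -x⁻¹ := neg_le_neg (inv_le_one_of_one_le₀ hx)
  have key := mul_le_mul_of_nonneg_left (rpow_one_add_le_one_add_mul_self hs hβ0 hβ1)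
    (rpow_nonneg hx0.le β)
  rw [← mul_rpow hx0.le (by linarith)] at key
  rw [rpow_sub_one hx0.ne']
  have : x * (1 + -x⁻¹) = x - 1 := by field_simp; ring
  rw [this] at key
  have : x ^ β * (1 + β * -x⁻¹) = x ^ β - β * (x ^ β / x) := by field_simp; ring
  linarith

theorem sum_range_rpow_le_of_nonneg {s : ℝ} (hs : 0 ≤ s) (n : ℕ) :
    ∑ i ∈ range n, ((i : ℝ) + 1) ^ s ≤ (n : ℝ) ^ (s + 1) := by
  calc ∑ i ∈ range n, ((i : ℝ) + 1) ^ s ≤ ∑ _i ∈ range n, (n : ℝ) ^ s := by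
        refine sum_le_sum fun i hi => rpow_le_rpow (by positivity) ?_ hs
        exact_mod_cast mem_range.1 hi
    _ = (n : ℝ) ^ (s + 1) := by
        rcases n.eq_zero_or_pos with rfl | hn
        · simp [zero_rpow (by linarith : s + 1 ≠ 0)]
        · rw [sum_const, card_range, nsmul_eq_mul, rpow_add_one (by positivity)]; ring

theorem sum_range_rpow_le_of_neg_one_lt_of_nonpos {s : ℝ} (hs1 : -1 < s) (hs0 : s ≤ 0)
    (n : ℕ) : ∑ i ∈ range n, ((i : ℝ) + 1) ^ s ≤ (s + 1)⁻¹ * (n : ℝ) ^ (s + 1) := by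
  have hβ : 0 < s + 1 := by linarith
  rw [le_inv_mul_iff₀ hβ, mul_sum]
  calc ∑ i ∈ range n, (s + 1) * ((i : ℝ) + 1) ^ s
      ≤ ∑ i ∈ range n, (((i + 1 : ℕ) : ℝ) ^ (s + 1) - ((i : ℕ) : ℝ) ^ (s + 1)) := by
        refine sum_le_sum fun i _ => ?_
        simpa using mul_rpow_sub_one_le_rpow_sub_rpow hβ.le (by linarith)
          (le_add_of_nonneg_left (Nat.cast_nonneg i : (0 : ℝ) ≤ i))
    _ = (n : ℝ) ^ (s + 1) := by
        rw [sum_range_sub (fun i : ℕ => (i : ℝ) ^ (s + 1))]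
        simp [zero_rpow hβ.ne']

theorem isBigO_sum_range_rpow_of_neg_one_lt {s : ℝ} (hs : -1 < s) :
    (fun n : ℕ => ∑ i ∈ range n, ((i : ℝ) + 1) ^ s) =O[atTop] fun n => (n : ℝ) ^ (s + 1) := by
  refine IsBigO.of_bound (max 1 (s + 1)⁻¹) (Eventually.of_forall fun n => ?_)
  have hsum : 0 ≤ ∑ i ∈ range n, ((i : ℝ) + 1) ^ s := sum_nonneg fun i _ => by positivity
  rw [norm_of_nonneg hsum, norm_of_nonneg (by positivity)]
  rcases le_total 0 s with h0 | h0
  · exact (sum_range_rpow_le_of_nonneg h0 n).trans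
      (le_mul_of_one_le_left (by positivity) (le_max_left _ _))
  · exact (sum_range_rpow_le_of_neg_one_lt_of_nonpos hs h0 n).trans
      (mul_le_mul_of_nonneg_right (le_max_right _ _) (by positivity))

theorem isBigO_sum_range_rpow_of_lt_neg_one {s : ℝ} (hs : s < -1) :
    (fun n : ℕ => ∑ i ∈ range n, ((i : ℝ) + 1) ^ s) =O[atTop] fun _ => (1 : ℝ) := by
  have hsum : Summable fun i : ℕ => ((i : ℝ) + 1) ^ s := by
    simpa using (summable_nat_add_iff 1).2 (Real.summable_nat_rpow.2 hs)
  refine IsBigO.of_bound (∑' i : ℕ, ((i : ℝ) + 1) ^ s)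
    (Eventually.of_forall fun n => ?_)
  rw [norm_of_nonneg (sum_nonneg fun i _ => by positivity), norm_one, mul_one]
  exact hsum.sum_le_tsum _ fun i _ => by positivity

theorem isBigO_sum_range_inv_log :
    (fun n : ℕ => ∑ i ∈ range n, ((i : ℝ) + 1) ^ (-1 : ℝ)) =O[atTop] fun n => log n := by
  have hharm (n : ℕ) : ∑ i ∈ range n, ((i : ℝ) + 1) ^ (-1 : ℝ) = harmonic n := by
    simp [harmonic, rpow_neg_one]
  have hlog : (fun n : ℕ => 1 + log n) =O[atTop] fun n => log n :=
    ((isLittleO_const_log_atTop.comp_tendsto tendsto_natCast_atTop_atTop).isBigO).add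
      (isBigO_refl _ _)
  refine IsBigO.trans ?_ hlog
  refine IsBigO.of_bound 1 ((eventually_ge_atTop 1).mono fun n hn => ?_)
  have : 0 ≤ log n := log_nonneg (by exact_mod_cast hn)
  rw [norm_of_nonneg (sum_nonneg fun i _ => by positivity), norm_of_nonneg (by positivity),
    one_mul, hharm]
  exact harmonic_le_one_add_log n

def radialSummand (α : ℝ) (n : ℕ) (j k : ℤ) : ℝ :=
  if -π ≤ 2 * π * j / n ∧ 2 * π * j / n < π ∧
      -π ≤ 2 * π * k / n ∧ 2 * π * k / n < π ∧ (j, k) ≠ (0, 0)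
  then
    sSup ((fun p : ℝ × ℝ => Real.sqrt (p.1 ^ 2 + p.2 ^ 2) ^ (-α)) ''
      (Set.Icc (2 * π * j / n - π / n) (2 * π * j / n + π / n) ×ˢ
        Set.Icc (2 * π * k / n - π / n) (2 * π * k / n + π / n)))
  else 0

theorem radialSum_eq_tsum (α : ℝ) (n : ℕ) :
    radialSum α n = (2 * π / n) ^ 2 * ∑' j : ℤ, ∑' k : ℤ, radialSummand α n j k :=
  rfl

theorem mem_Icc_of_neg_pi_le_of_lt_pi {n : ℕ} (hn : n ≠ 0) {j : ℤ} (h₁ : -π ≤ 2 * π * j / n)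
    (h₂ : 2 * π * j / n < π) : j ∈ Icc (-n : ℤ) n := by
  have hn0 : (0 : ℝ) < n := by positivity
  rw [le_div_iff₀ hn0] at h₁
  rw [div_lt_iff₀ hn0] at h₂
  have : -(n : ℝ) ≤ j ∧ (j : ℝ) ≤ n := ⟨by nlinarith [pi_pos], by nlinarith [pi_pos]⟩
  rw [mem_Icc]
  exact_mod_cast this

theorem radialSummand_nonneg (α : ℝ) (n : ℕ) (j k : ℤ) : 0 ≤ radialSummand α n j k := by
  unfold radialSummand
  split_ifs
  · exact Real.sSup_nonneg fun _ ⟨x, _, hx⟩ => hx ▸ by positivity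
  · exact le_rfl

theorem radialSum_eq_sum {α : ℝ} {n : ℕ} (hn : n ≠ 0) :
    radialSum α n =
      (2 * π / n) ^ 2 * ∑ p ∈ Icc (-n : ℤ × ℤ) n, radialSummand α n p.1 p.2 := by
  have hIcc : Icc (-n : ℤ × ℤ) n = Icc (-n : ℤ) n ×ˢ Icc (-n : ℤ) n := by
    rw [Icc_product_Icc]; rfl
  rw [radialSum_eq_tsum, hIcc, tsum_tsum_eq_sum_product]
  intro j k h
  unfold radialSummand at h
  obtain ⟨⟨h₁, h₂, h₃, h₄, -⟩, -⟩ := ite_ne_right_iff.1 h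
  exact ⟨mem_Icc_of_neg_pi_le_of_lt_pi hn h₁ h₂, mem_Icc_of_neg_pi_le_of_lt_pi hn h₃ h₄⟩

theorem norm_mem_Icc_of_mem_cell {n m : ℕ} (hn : n ≠ 0) (hm : m ≠ 0) {j k : ℤ}
    (hjk : (j, k) ∈ box m) {x : ℝ × ℝ}
    (hx : x ∈ Set.Icc (2 * π * j / n - π / n) (2 * π * j / n + π / n) ×ˢ
      Set.Icc (2 * π * k / n - π / n) (2 * π * k / n + π / n)) :
    ‖x‖ ∈ Set.Icc (π * m / n) (3 * π * m / n) := by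
  set c : ℝ × ℝ := (2 * π * j / n, 2 * π * k / n)
  have hn0 : (0 : ℝ) < n := by positivity
  have hm1 : (1 : ℝ) ≤ m := by exact_mod_cast Nat.one_le_iff_ne_zero.2 hm
  have hc : ‖c‖ = 2 * π * m / n := by
    have habs (i : ℤ) : |2 * π * i / n| = 2 * π / n * |(i : ℝ)| := by
      rw [abs_div, abs_mul, abs_of_pos two_pi_pos, abs_of_pos hn0]; ring
    rw [Int.mem_box] at hjk
    rw [Prod.norm_mk, Real.norm_eq_abs, Real.norm_eq_abs, habs, habs,
      ← mul_max_of_nonneg _ _ (by positivity), ← hjk, Nat.cast_max, Nat.cast_natAbs,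
      Nat.cast_natAbs, Int.cast_abs, Int.cast_abs]
    ring
  have hxc : ‖x - c‖ ≤ π / n := by
    obtain ⟨⟨h₁, h₂⟩, h₃, h₄⟩ := hx
    simp only [c, Prod.norm_def, Prod.fst_sub, Prod.snd_sub, Real.norm_eq_abs]
    exact max_le (abs_sub_le_iff.2 ⟨by linarith, by linarith⟩)
      (abs_sub_le_iff.2 ⟨by linarith, by linarith⟩)
  have h₁ := norm_sub_norm_le c x
  have h₂ := norm_le_norm_add_norm_sub' x c
  rw [norm_sub_rev] at h₁
  constructor
  · calc π * m / n ≤ 2 * π * m / n - π / n := by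
          rw [← sub_div]; gcongr; nlinarith [pi_pos]
      _ ≤ ‖x‖ := by linarith
  · calc ‖x‖ ≤ 2 * π * m / n + π / n := by linarith
      _ ≤ 3 * π * m / n := by rw [← add_div]; gcongr; nlinarith [pi_pos]

theorem radialSummand_le_of_mem_box (α : ℝ) {n m : ℕ} (hn : n ≠ 0) (hm : m ≠ 0) {p : ℤ × ℤ}
    (hp : p ∈ box m) :
    radialSummand α n p.1 p.2 ≤ (π ^ (-α) + (6 * π) ^ (-α)) * ((m : ℝ) / n) ^ (-α) := by
  have hmn : 0 < (m : ℝ) / n := by positivity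
  unfold radialSummand
  split_ifs
  · refine Real.sSup_le (fun _ ⟨x, hx, hr⟩ => hr ▸ ?_) (by positivity)
    have hnorm := norm_mem_Icc_of_mem_cell hn hm hp hx
    have hsqrt : √(x.1 ^ 2 + x.2 ^ 2) ∈ Set.Icc (π * (m / n)) (6 * π * (m / n)) := by
      have h6 : 6 * π * (m / n) = 2 * (3 * π * m / n) := by ring
      rw [← mul_div_assoc, h6]
      exact ⟨hnorm.1.trans (Prod.norm_le_sqrt_sq_add_sq x),
        (Prod.sqrt_sq_add_sq_le_two_mul_norm x).trans (by linarith [hnorm.2])⟩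
    calc √(x.1 ^ 2 + x.2 ^ 2) ^ (-α) ≤ (π * (m / n)) ^ (-α) + (6 * π * (m / n)) ^ (-α) :=
          rpow_le_rpow_add_rpow_of_mem_Icc (by positivity) hsqrt _
      _ = _ := by rw [mul_rpow pi_pos.le hmn.le, mul_rpow (by positivity) hmn.le]; ring
  · positivity

theorem sum_radialSummand_le (α : ℝ) {n : ℕ} (hn : n ≠ 0) :
    ∑ p ∈ Icc (-n : ℤ × ℤ) n, radialSummand α n p.1 p.2 ≤
      ∑ i ∈ range n, 8 * ((i : ℝ) + 1) *
        ((π ^ (-α) + (6 * π) ^ (-α)) * (((i : ℝ) + 1) / n) ^ (-α)) := by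
  rw [sum_Icc_neg_eq_sum_range_sum_box, sum_range_succ']
  have hzero : radialSummand α n 0 0 = 0 := if_neg fun h => h.2.2.2.2 rfl
  simp only [box_zero, sum_singleton, Prod.fst_zero, Prod.snd_zero, hzero, add_zero]
  refine sum_le_sum fun i _ => ?_
  have := sum_le_card_nsmul _ _ _ fun p hp => radialSummand_le_of_mem_box α hn i.succ_ne_zero hp
  rw [Int.card_box i.succ_ne_zero, nsmul_eq_mul] at this
  push_cast at this
  linarith

theorem mul_div_rpow_neg_div_sq {x N : ℝ} (hx : 0 < x) (hN : 0 < N) (α : ℝ) :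
    x * (x / N) ^ (-α) / N ^ 2 = N ^ (α - 2) * x ^ (1 - α) := by
  rw [div_rpow hx.le hN.le, rpow_neg hN.le, rpow_sub hN, rpow_sub hx, rpow_one, rpow_two,
    rpow_neg hx.le]
  field_simp

theorem radialSum_le (α : ℝ) {n : ℕ} (hn : n ≠ 0) :
    radialSum α n ≤ 32 * π ^ 2 * (π ^ (-α) + (6 * π) ^ (-α)) *
      ((n : ℝ) ^ (α - 2) * ∑ i ∈ range n, ((i : ℝ) + 1) ^ (1 - α)) := by
  calc radialSum α n
      ≤ (2 * π / n) ^ 2 * ∑ i ∈ range n, 8 * ((i : ℝ) + 1) *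
          ((π ^ (-α) + (6 * π) ^ (-α)) * (((i : ℝ) + 1) / n) ^ (-α)) := by
        rw [radialSum_eq_sum hn]
        exact mul_le_mul_of_nonneg_left (sum_radialSummand_le α hn) (by positivity)
    _ = _ := by
        have : (0 : ℝ) < n := by positivity
        rw [mul_sum, mul_sum, mul_sum]
        refine sum_congr rfl fun i _ => ?_
        rw [← mul_div_rpow_neg_div_sq (by positivity) this]
        ring

theorem radialSum_isBigO (α : ℝ) :
    (fun n : ℕ => radialSum α n) =O[atTop]
      fun n : ℕ => (n : ℝ) ^ (α - 2) * ∑ i ∈ range n, ((i : ℝ) + 1) ^ (1 - α) := by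
  refine IsBigO.of_bound (32 * π ^ 2 * (π ^ (-α) + (6 * π) ^ (-α)))
    ((eventually_ne_atTop 0).mono fun n hn => ?_)
  rw [norm_of_nonneg, norm_of_nonneg]
  · exact radialSum_le α hn
  · exact mul_nonneg (by positivity) (sum_nonneg fun i _ => by positivity)
  · rw [radialSum_eq_tsum]
    exact mul_nonneg (by positivity)
      (tsum_nonneg fun j => tsum_nonneg fun k => radialSummand_nonneg α n j k)

/-- as `n → ∞` the above quantity is `O(n^{α−2})` if `α > 2`, `O(log n)` if
`α = 2`, and `O(1)` if `α < 2`. -/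
theorem radialSum_asymptotics (α : ℝ) :
    (2 < α → (fun n : ℕ => radialSum α n) =O[atTop] fun n : ℕ => (n : ℝ) ^ (α - 2)) ∧
    (α = 2 → (fun n : ℕ => radialSum α n) =O[atTop] fun n : ℕ => Real.log n) ∧
    (α < 2 → (fun n : ℕ => radialSum α n) =O[atTop] fun _ : ℕ => (1 : ℝ)) := by
  refine ⟨fun hα => ?_, fun hα => ?_, fun hα => ?_⟩
  · simpa using (radialSum_isBigO α).trans
      ((isBigO_refl _ _).mul (isBigO_sum_range_rpow_of_lt_neg_one (by linarith)))
  · subst hα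
    have h := radialSum_isBigO 2
    simp only [sub_self, rpow_zero, one_mul, show (1 : ℝ) - 2 = -1 by norm_num] at h
    exact h.trans isBigO_sum_range_inv_log
  · refine (radialSum_isBigO α).trans (((isBigO_refl _ _).mul
      (isBigO_sum_range_rpow_of_neg_one_lt (by linarith))).trans ?_)
    refine EventuallyEq.isBigO ((eventually_ne_atTop 0).mono fun n hn => ?_)
    dsimp only
    rw [← rpow_add (by positivity), show α - 2 + (1 - α + 1) = 0 by ring, rpow_zero]
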